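/- arXiv:2002.07905 — 7 statements merged into one kernel-verified Lean document; each statement's English description precedes it below -/
import Mathlib

section
/- Let S ≥ 1, let P be an S×S row-stochastic real matrix, α ∈ (0,1), and for each state s let ν_s = (1−α) e_s^T (I − αP)^{-1}. Fix vectors v̂, r ∈ ℝ^S and a state s_k, and define v̂', r' ∈ ℝ^S by v̂'(s) = v̂(s) + (1−α) r(s_k) 1(s = s_k) and r'(s) = r(s)·1(s ≠ s_k) + α P(s, s_k) r(s_k) for each s. Then for every state s: v̂'(s) + ν_s · r' = v̂(s) + ν_s · r, where ν_s · r denotes Σ_{s'} ν_s(s') r(s'). -/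
open Finset

/-- Single-iteration invariant of the Backward-EPE push operation.
With `ν_s = (1-α) e_s^T (I - αP)⁻¹`, if `vhat'(s) = vhat(s) + (1-α) r(s_k) 1(s = s_k)` and
`r'(s) = r(s)·1(s ≠ s_k) + α P(s,s_k) r(s_k)`, then
`vhat'(s) + ν_s·r' = vhat(s) + ν_s·r` for every state `s`. -/
theorem backward_epe_push_invariant_step
    (S : ℕ) (hS : 1 ≤ S) (P : Matrix (Fin S) (Fin S) ℝ)
    (hPnonneg : ∀ i j, 0 ≤ P i j) (hProw : ∀ i, ∑ j, P i j = 1)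
    (α : ℝ) (hα : α ∈ Set.Ioo (0 : ℝ) 1)
    (ν : Fin S → Fin S → ℝ)
    (hν : ∀ s s', ν s s' = (1 - α) * (1 - α • P)⁻¹ s s')
    (vhat r vhat' r' : Fin S → ℝ) (sk : Fin S)
    (hvhat' : ∀ s, vhat' s = vhat s + (1 - α) * r sk * (if s = sk then (1 : ℝ) else 0))
    (hr' : ∀ s, r' s = r s * (if s ≠ sk then (1 : ℝ) else 0) + α * P s sk * r sk) :
    ∀ s, vhat' s + ∑ s', ν s s' * r' s' = vhat s + ∑ s', ν s s' * r s' := by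
  obtain ⟨hα0, hα1⟩ := hα
  set A : Matrix (Fin S) (Fin S) ℝ := 1 - α • P with hA
  have hdet : A.det ≠ 0 := by
    apply det_ne_zero_of_sum_row_lt_diag
    intro k
    have h1 : ∀ j ∈ Finset.univ.erase k, ‖A k j‖ = α * P k j := by
      intro j hj
      have hjk : j ≠ k := (Finset.mem_erase.mp hj).1
      have : A k j = -(α * P k j) := by
        simp [hA, Matrix.sub_apply, Matrix.one_apply, hjk.symm]
      rw [this]
      rw [norm_neg, Real.norm_eq_abs, abs_of_nonneg (mul_nonneg hα0.le (hPnonneg k j))]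
    rw [Finset.sum_congr rfl h1]
    have hAkk : A k k = 1 - α * P k k := by
      simp [hA, Matrix.sub_apply, Matrix.one_apply]
    have hPkk : α * P k k ≤ α := by
      have : P k k ≤ 1 := by
        have := hProw k
        calc P k k ≤ ∑ j, P k j := Finset.single_le_sum (fun j _ => hPnonneg k j) (Finset.mem_univ k)
        _ = 1 := this
      nlinarith
    have hsum : ∑ j ∈ Finset.univ.erase k, α * P k j = α * (1 - P k k) := by
      rw [← Finset.mul_sum]
      congr 1
      have := hProw k
      have h2 : ∑ j, P k j = P k k + ∑ j ∈ Finset.univ.erase k, P k j :=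
        (Finset.add_sum_erase _ _ (Finset.mem_univ k)).symm
      linarith
    rw [hsum, hAkk, Real.norm_eq_abs, abs_of_pos (by nlinarith)]
    nlinarith
  have hmul : A⁻¹ * A = 1 := Matrix.nonsing_inv_mul A (isUnit_iff_ne_zero.mpr hdet)
  intro s
  have key0 := congrArg (fun M => M s sk) hmul
  simp only [Matrix.mul_apply, Matrix.one_apply] at key0
  have key : A⁻¹ s sk - α * ∑ s', A⁻¹ s s' * P s' sk = if s = sk then 1 else 0 := by
    have expand : ∀ s', A⁻¹ s s' * A s' sk
        = (if s' = sk then A⁻¹ s s' else 0) - α * (A⁻¹ s s' * P s' sk) := by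
      intro s'
      by_cases h : s' = sk <;> simp [hA, Matrix.sub_apply, Matrix.one_apply, h, mul_sub] <;> ring
    rw [Finset.sum_congr rfl (fun s' _ => expand s'), Finset.sum_sub_distrib,
      Finset.sum_ite_eq' Finset.univ sk, ← Finset.mul_sum] at key0
    simpa using key0
  have hsum1 : ∑ s', ν s s' * r' s'
      = (∑ s', ν s s' * r s') - ν s sk * r sk + α * (∑ s', ν s s' * P s' sk) * r sk := by
    have expand : ∀ s', ν s s' * r' s'
        = (ν s s' * r s' - (if s' = sk then ν s s' * r s' else 0)) + (α * r sk) * (ν s s' * P s' sk) := by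
      intro s'
      rw [hr' s']
      by_cases h : s' = sk <;> simp [h] <;> ring
    rw [Finset.sum_congr rfl (fun s' _ => expand s'), Finset.sum_add_distrib,
      Finset.sum_sub_distrib, Finset.sum_ite_eq' Finset.univ sk, ← Finset.mul_sum]
    simp
    ring
  rw [hsum1, hvhat' s]
  have hν1 : ν s sk = (1 - α) * A⁻¹ s sk := hν s sk
  have hν2 : ∑ s', ν s s' * P s' sk = (1 - α) * ∑ s', A⁻¹ s s' * P s' sk := by
    rw [Finset.mul_sum]
    exact Finset.sum_congr rfl fun s' _ => by rw [hν s s']; ring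
  rw [hν1, hν2]
  rcases eq_or_ne s sk with h | h <;> simp [h] at key ⊢ <;> linear_combination ((α - 1) * r sk) * key
end

section
/- Let S ≥ 1, let P be an S×S row-stochastic real matrix, α ∈ (0,1), c ∈ ℝ^S, and for each state s let ν_s = (1−α) e_s^T (I − αP)^{-1}. Let K ∈ ℕ, let s_1, …, s_K be states, and let (v̂_k)_{k=0}^K and (r_k)_{k=0}^K be sequences in ℝ^S satisfying v̂_0 = 0, r_0 = c, and for each k ∈ {1,…,K} and each state s: v̂_k(s) = v̂_{k−1}(s) + (1−α) r_{k−1}(s_k) 1(s = s_k) and r_k(s) = r_{k−1}(s)·1(s ≠ s_k) + α P(s, s_k) r_{k−1}(s_k). Then for every k ∈ {0,…,K} and every state s: v̂_k(s) + ν_s · r_k = ν_s · c. -/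
/-- Deterministic invariant of the Backward-EPE push recursion.
If `vhat_0 = 0`, `r_0 = c`, and at each iteration `k ∈ {1,…,K}` the pair
`(vhat_k, r_k)` is obtained from `(vhat_{k-1}, r_{k-1})` by a push on state `s_k`
using the entries of `P`, then `vhat_k(s) + ν_s·r_k = ν_s·c` for all `0 ≤ k ≤ K`
and all states `s`, where `ν_s = (1-α) e_s^T (I - αP)⁻¹`. -/
theorem backward_epe_push_invariant
    (S : ℕ) (hS : 1 ≤ S) (P : Matrix (Fin S) (Fin S) ℝ)
    (hPnonneg : ∀ i j, 0 ≤ P i j) (hProw : ∀ i, ∑ j, P i j = 1)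
    (α : ℝ) (hα : α ∈ Set.Ioo (0 : ℝ) 1) (c : Fin S → ℝ)
    (ν : Fin S → Fin S → ℝ)
    (hν : ∀ s s', ν s s' = (1 - α) * (1 - α • P)⁻¹ s s')
    (K : ℕ) (sk : ℕ → Fin S) (vhat r : ℕ → Fin S → ℝ)
    (hv0 : ∀ s, vhat 0 s = 0) (hr0 : ∀ s, r 0 s = c s)
    (hvup : ∀ k ∈ Finset.Icc 1 K, ∀ s,
      vhat k s = vhat (k - 1) s
        + (1 - α) * r (k - 1) (sk k) * (if s = sk k then (1 : ℝ) else 0))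
    (hrup : ∀ k ∈ Finset.Icc 1 K, ∀ s,
      r k s = r (k - 1) s * (if s ≠ sk k then (1 : ℝ) else 0)
        + α * P s (sk k) * r (k - 1) (sk k)) :
    ∀ k ≤ K, ∀ s, vhat k s + ∑ s', ν s s' * r k s' = ∑ s', ν s s' * c s' := by
  obtain ⟨hα0, hα1⟩ := hα
  set B : Matrix (Fin S) (Fin S) ℝ := 1 - α • P with hB
  have hBij : ∀ i j, B i j = (if i = j then (1:ℝ) else 0) - α * P i j := by
    intro i j
    simp [hB, Matrix.sub_apply, Matrix.one_apply, Matrix.smul_apply]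
  have hdet : B.det ≠ 0 := by
    apply det_ne_zero_of_sum_row_lt_diag
    intro k
    have h1 : ∀ j ∈ Finset.univ.erase k, ‖B k j‖ = α * P k j := by
      intro j hj
      have hjk : ¬ (k = j) := fun h => (Finset.mem_erase.mp hj).1 h.symm
      rw [hBij]
      simp only [hjk, if_false, zero_sub, norm_neg]
      rw [Real.norm_eq_abs, abs_of_nonneg (mul_nonneg hα0.le (hPnonneg k j))]
    rw [Finset.sum_congr rfl h1]
    have h2 : ∑ j ∈ Finset.univ.erase k, α * P k j = α * (1 - P k k) := by
      rw [← Finset.mul_sum]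
      congr 1
      have := Finset.sum_erase_eq_sub (f := fun j => P k j) (Finset.mem_univ k)
      rw [this, hProw]
    rw [h2, hBij]
    simp only [eq_self_iff_true, if_true]
    have hPkk1 : P k k ≤ 1 := by
      have := hProw k
      have : P k k ≤ ∑ j, P k j :=
        Finset.single_le_sum (fun j _ => hPnonneg k j) (Finset.mem_univ k)
      linarith [hProw k]
    have hpos : 0 < 1 - α * P k k := by nlinarith [hPnonneg k k]
    rw [Real.norm_eq_abs, abs_of_pos hpos]
    nlinarith [hPnonneg k k]
  have hunit : IsUnit B.det := isUnit_iff_ne_zero.mpr hdet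
  have hinv : B⁻¹ * B = 1 := Matrix.nonsing_inv_mul B hunit
  -- key identity: ν s s'' = (1-α)·[s=s''] + α Σ_{s'} ν s s' P s' s''
  have key : ∀ s s'' : Fin S,
      (1 - α) * (if s = s'' then (1:ℝ) else 0) + α * ∑ s', ν s s' * P s' s'' = ν s s'' := by
    intro s s''
    have h := congrFun (congrFun hinv s) s''
    rw [Matrix.mul_apply, Matrix.one_apply] at h
    have h2 : ∑ s', B⁻¹ s s' * ((if s' = s'' then (1:ℝ) else 0) - α * P s' s'')
        = if s = s'' then (1:ℝ) else 0 := by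
      rw [← h]
      exact Finset.sum_congr rfl fun s' _ => by rw [hBij]
    have h3 : ∑ s', B⁻¹ s s' * ((if s' = s'' then (1:ℝ) else 0) - α * P s' s'')
        = B⁻¹ s s'' - α * ∑ s', B⁻¹ s s' * P s' s'' := by
      rw [Finset.sum_congr rfl fun s' _ => mul_sub (B⁻¹ s s') _ _, Finset.sum_sub_distrib]
      congr 1
      · simp [mul_ite]
      · rw [Finset.mul_sum]
        exact Finset.sum_congr rfl fun s' _ => by ring
    rw [h3] at h2
    simp only [hν]
    rw [show (∑ s', (1 - α) * B⁻¹ s s' * P s' s'')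
        = (1 - α) * ∑ s', B⁻¹ s s' * P s' s'' by
      rw [Finset.mul_sum]; exact Finset.sum_congr rfl fun s' _ => by ring]
    nlinarith [h2]
  -- induction
  intro k hk
  induction k with
  | zero =>
    intro s
    simp only [hv0, hr0, zero_add]
  | succ n ih =>
    have hn : n ≤ K := Nat.le_of_succ_le hk
    have ihn := ih hn
    have hmem : n + 1 ∈ Finset.Icc 1 K := Finset.mem_Icc.mpr ⟨Nat.succ_le_succ (Nat.zero_le n), hk⟩
    intro s
    set t := sk (n + 1) with ht
    have hv := hvup (n + 1) hmem s
    have hr := hrup (n + 1) hmem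
    simp only [Nat.add_sub_cancel] at hv hr
    have hsum : ∑ s', ν s s' * r (n + 1) s'
        = (∑ s', ν s s' * r n s') - ν s t * r n t
          + α * (∑ s', ν s s' * P s' t) * r n t := by
      rw [Finset.sum_congr rfl fun s' _ => by rw [hr s']]
      have : ∀ s' : Fin S,
          ν s s' * (r n s' * (if s' ≠ t then (1:ℝ) else 0) + α * P s' t * r n t)
          = (ν s s' * r n s' - (if s' = t then ν s s' * r n s' else 0))
            + (ν s s' * P s' t) * (α * r n t) := by
        intro s'
        by_cases h : s' = t <;> simp [h] <;> ring
      rw [Finset.sum_congr rfl fun s' _ => this s', Finset.sum_add_distrib,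
        Finset.sum_sub_distrib, Finset.sum_ite_eq' Finset.univ t
          (fun s' => ν s s' * r n s'), ← Finset.sum_mul]
      simp only [Finset.mem_univ, if_true]
      ring
    rw [hv, hsum, ← ht]
    have hk2 := key s t
    have hthis := ihn s
    linear_combination hthis + r n t * hk2
end

section
/- Let S ≥ 1, let P be an S×S row-stochastic real matrix, α ∈ (0,1), ε > 0, and let c ∈ ℝ^S have nonnegative entries. Let K ∈ ℕ, s_1, …, s_K, (v̂_k)_{k=0}^K, (r_k)_{k=0}^K satisfy the push recursion: v̂_0 = 0, r_0 = c, and for each k ∈ {1,…,K}, v̂_k(s) = v̂_{k−1}(s) + (1−α) r_{k−1}(s_k) 1(s = s_k) and r_k(s) = r_{k−1}(s)·1(s ≠ s_k) + α P(s, s_k) r_{k−1}(s_k). Assume moreover r_{k−1}(s_k) > ε for every k ∈ {1,…,K}. Then for every state s, the number of indices k ∈ {1,…,K} with s_k = s is at most (ν_s · c)/(ε(1−α)), where ν_s = (1−α) e_s^T (I − αP)^{-1}; consequently K ≤ (Σ_s ν_s · c)/(ε(1−α)). -/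
/-- M-matrix property: if `(I - αP).mulVec x` is entrywise nonnegative, so is `x`. -/
lemma mmatrix_nonneg {S : ℕ} (hS : 1 ≤ S) (P : Matrix (Fin S) (Fin S) ℝ)
    (hPnonneg : ∀ i j, 0 ≤ P i j) (hProw : ∀ i, ∑ j, P i j = 1)
    (α : ℝ) (hα : α ∈ Set.Ioo (0 : ℝ) 1) (x : Fin S → ℝ)
    (hx : ∀ i, 0 ≤ ((1 - α • P).mulVec x) i) : ∀ i, 0 ≤ x i := by
  have hne : (Finset.univ : Finset (Fin S)).Nonempty := by
    have : Nonempty (Fin S) := ⟨⟨0, hS⟩⟩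
    exact Finset.univ_nonempty
  obtain ⟨i0, -, hi0⟩ := Finset.exists_min_image Finset.univ x hne
  have hmv : ((1 - α • P).mulVec x) i0 = x i0 - α * ∑ j, P i0 j * x j := by
    simp only [Matrix.mulVec, dotProduct, Matrix.sub_apply, Matrix.smul_apply,
      Matrix.one_apply, smul_eq_mul, sub_mul, ite_mul, one_mul, zero_mul]
    rw [Finset.sum_sub_distrib, Finset.sum_ite_eq, if_pos (Finset.mem_univ i0),
      Finset.mul_sum]
    ring_nf
  have hsum : x i0 ≤ ∑ j, P i0 j * x j := by
    calc x i0 = ∑ j, P i0 j * x i0 := by rw [← Finset.sum_mul, hProw, one_mul]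
    _ ≤ ∑ j, P i0 j * x j := by
        apply Finset.sum_le_sum
        intro j _
        exact mul_le_mul_of_nonneg_left (hi0 j (Finset.mem_univ j)) (hPnonneg i0 j)
  have h0 : 0 ≤ x i0 - α * ∑ j, P i0 j * x j := hmv ▸ hx i0
  have hx0 : 0 ≤ x i0 := by nlinarith [hα.1, hα.2]
  intro i
  exact le_trans hx0 (hi0 i (Finset.mem_univ i))

/-- Push-count bound for the Backward-EPE recursion. Under the push
recursion with nonnegative cost `c` and the condition `r_{k-1}(s_k) > ε` at every
iteration, each state `s` is pushed at most `(ν_s·c)/(ε(1-α))` times, and hence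
`K ≤ (Σ_s ν_s·c)/(ε(1-α))`, where `ν_s = (1-α) e_s^T (I - αP)⁻¹`. -/
theorem backward_epe_push_count_bound
    (S : ℕ) (hS : 1 ≤ S) (P : Matrix (Fin S) (Fin S) ℝ)
    (hPnonneg : ∀ i j, 0 ≤ P i j) (hProw : ∀ i, ∑ j, P i j = 1)
    (α : ℝ) (hα : α ∈ Set.Ioo (0 : ℝ) 1) (ε : ℝ) (hε : 0 < ε)
    (c : Fin S → ℝ) (hc : ∀ s, 0 ≤ c s)
    (ν : Fin S → Fin S → ℝ)
    (hν : ∀ s s', ν s s' = (1 - α) * (1 - α • P)⁻¹ s s')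
    (K : ℕ) (sk : ℕ → Fin S) (vhat r : ℕ → Fin S → ℝ)
    (hv0 : ∀ s, vhat 0 s = 0) (hr0 : ∀ s, r 0 s = c s)
    (hvup : ∀ k ∈ Finset.Icc 1 K, ∀ s,
      vhat k s = vhat (k - 1) s
        + (1 - α) * r (k - 1) (sk k) * (if s = sk k then (1 : ℝ) else 0))
    (hrup : ∀ k ∈ Finset.Icc 1 K, ∀ s,
      r k s = r (k - 1) s * (if s ≠ sk k then (1 : ℝ) else 0)
        + α * P s (sk k) * r (k - 1) (sk k))
    (hbig : ∀ k ∈ Finset.Icc 1 K, r (k - 1) (sk k) > ε) :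
    (∀ s, (((Finset.Icc 1 K).filter (fun k => sk k = s)).card : ℝ)
        ≤ (∑ s', ν s s' * c s') / (ε * (1 - α))) ∧
    (K : ℝ) ≤ (∑ s, ∑ s', ν s s' * c s') / (ε * (1 - α)) := by
  set A : Matrix (Fin S) (Fin S) ℝ := 1 - α • P with hA
  set B : Matrix (Fin S) (Fin S) ℝ := A⁻¹ with hB
  have hα1 : (0 : ℝ) < 1 - α := by linarith [hα.2]
  -- A is invertible
  have hdet : IsUnit A.det := by
    by_contra hd
    have hd0 : A.det = 0 := by
      simpa [isUnit_iff_ne_zero] using hd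
    obtain ⟨v, hv, hvne⟩ := (Matrix.exists_mulVec_eq_zero_iff).2 hd0
    have h1 : ∀ i, 0 ≤ v i := by
      refine mmatrix_nonneg hS P hPnonneg hProw α hα v ?_
      intro i
      show 0 ≤ A.mulVec v i
      rw [hvne]; simp
    have h2 : ∀ i, 0 ≤ -v i := by
      refine mmatrix_nonneg hS P hPnonneg hProw α hα (-v) ?_
      intro i
      show 0 ≤ A.mulVec (-v) i
      have hmv : A.mulVec (-v) = -(A.mulVec v) := by simp [Matrix.mulVec_neg]
      rw [hmv, hvne]
      simp
    exact hv (funext fun i => by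
      have ha := h1 i; have hb := h2 i
      simp only [Pi.zero_apply]; linarith)
  have hBA : B * A = 1 := Matrix.nonsing_inv_mul A hdet
  have hAB : A * B = 1 := Matrix.mul_nonsing_inv A hdet
  -- B is entrywise nonnegative
  have hBnonneg : ∀ i j, 0 ≤ B i j := by
    intro i j
    have := mmatrix_nonneg hS P hPnonneg hProw α hα (fun k => B k j) ?_ i
    · exact this
    · intro k
      have : ((1 - α • P).mulVec fun k => B k j) k = (A * B) k j := by
        simp [Matrix.mulVec, dotProduct, Matrix.mul_apply, hA]
      rw [this, hAB]
      by_cases h : k = j <;> simp [Matrix.one_apply, h]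
  -- r is entrywise nonnegative
  have hrnn : ∀ k, k ≤ K → ∀ s, 0 ≤ r k s := by
    intro k
    induction k with
    | zero => intro _ s; rw [hr0]; exact hc s
    | succ n ih =>
      intro hk s
      have hn : n ≤ K := Nat.le_of_succ_le hk
      have hmem : n + 1 ∈ Finset.Icc 1 K := Finset.mem_Icc.2 ⟨Nat.succ_le_succ (Nat.zero_le n), hk⟩
      rw [hrup (n + 1) hmem s]
      simp only [Nat.add_sub_cancel]
      have h1 : 0 ≤ r n s * (if s ≠ sk (n + 1) then (1 : ℝ) else 0) := by
        apply mul_nonneg (ih hn s); split_ifs <;> norm_num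
      have h2 : 0 ≤ α * P s (sk (n + 1)) * r n (sk (n + 1)) :=
        mul_nonneg (mul_nonneg (le_of_lt hα.1) (hPnonneg _ _)) (ih hn _)
      linarith
  -- the conservation invariant
  have hinv : ∀ k, k ≤ K → ∀ s,
      vhat k s + (1 - α) * ∑ s', B s s' * r k s' = (1 - α) * ∑ s', B s s' * c s' := by
    intro k
    induction k with
    | zero =>
      intro _ s
      simp [hv0, hr0]
    | succ n ih =>
      intro hk s
      have hn : n ≤ K := Nat.le_of_succ_le hk
      have hmem : n + 1 ∈ Finset.Icc 1 K := Finset.mem_Icc.2 ⟨Nat.succ_le_succ (Nat.zero_le n), hk⟩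
      set u := sk (n + 1) with hu
      -- entry of B * A
      have hBAe : ∑ s', B s s' * A s' u = (if s = u then (1 : ℝ) else 0) := by
        have : (B * A) s u = (1 : Matrix (Fin S) (Fin S) ℝ) s u := by rw [hBA]
        rw [Matrix.mul_apply] at this
        rw [this, Matrix.one_apply]
      have hAe : ∀ s', A s' u = (if s' = u then (1 : ℝ) else 0) - α * P s' u := by
        intro s'
        simp [hA, Matrix.sub_apply, Matrix.smul_apply, Matrix.one_apply]
      have halpha : α * ∑ s', B s s' * P s' u
          = B s u - (if s = u then (1 : ℝ) else 0) := by
        have h1 : ∑ s', B s s' * A s' u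
            = (∑ s', B s s' * (if s' = u then (1 : ℝ) else 0))
              - α * ∑ s', B s s' * P s' u := by
          simp only [hAe, mul_sub]
          rw [Finset.sum_sub_distrib, Finset.mul_sum]
          congr 1
          apply Finset.sum_congr rfl
          intro j _
          ring
        have h2 : (∑ s', B s s' * (if s' = u then (1 : ℝ) else 0)) = B s u := by
          simp [Finset.sum_ite_eq]
        have h4 := hBAe
        rw [h1, h2] at h4
        linarith
      -- sum identity after one push
      have key : ∑ s', B s s' * r (n + 1) s'
          = (∑ s', B s s' * r n s') - r n u * (if s = u then (1 : ℝ) else 0) := by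
        have expand : ∀ s', B s s' * r (n + 1) s'
            = B s s' * r n s' - (if s' = u then B s u * r n u else 0)
              + (B s s' * P s' u) * (α * r n u) := by
          intro s'
          have := hrup (n + 1) hmem s'
          simp only [Nat.add_sub_cancel, ← hu] at this
          rw [this]
          by_cases h : s' = u
          · subst h; simp; ring
          · simp [h]; ring
        rw [Finset.sum_congr rfl (fun s' _ => expand s'), Finset.sum_add_distrib,
          Finset.sum_sub_distrib, Finset.sum_ite_eq' Finset.univ u,
          if_pos (Finset.mem_univ u), ← Finset.sum_mul]
        have : (∑ s', B s s' * P s' u) * (α * r n u)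
            = (α * ∑ s', B s s' * P s' u) * r n u := by ring
        rw [this, halpha]
        ring
      have hvs := hvup (n + 1) hmem s
      simp only [Nat.add_sub_cancel, ← hu] at hvs
      rw [hvs, key]
      have := ih hn s
      ring_nf
      ring_nf at this
      linarith
  -- per-state lower bound on vhat via push counts
  have hlb : ∀ k, k ≤ K → ∀ s,
      (((Finset.Icc 1 k).filter (fun j => sk j = s)).card : ℝ) * (ε * (1 - α))
        ≤ vhat k s := by
    intro k
    induction k with
    | zero => intro _ s; simp [hv0]
    | succ n ih =>
      intro hk s
      have hn : n ≤ K := Nat.le_of_succ_le hk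
      have hmem : n + 1 ∈ Finset.Icc 1 K := Finset.mem_Icc.2 ⟨Nat.succ_le_succ (Nat.zero_le n), hk⟩
      have hvs := hvup (n + 1) hmem s
      simp only [Nat.add_sub_cancel] at hvs
      have hicc : Finset.Icc 1 (n + 1) = insert (n + 1) (Finset.Icc 1 n) := by
        ext x
        simp only [Finset.mem_Icc, Finset.mem_insert]
        omega
      have hnotmem : n + 1 ∉ Finset.Icc 1 n := by
        simp [Finset.mem_Icc]
      have hrb : ε < r n (sk (n + 1)) := by
        have := hbig (n + 1) hmem
        simpa using this
      by_cases hcase : sk (n + 1) = s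
      · have hfil : (Finset.Icc 1 (n + 1)).filter (fun j => sk j = s)
            = insert (n + 1) ((Finset.Icc 1 n).filter (fun j => sk j = s)) := by
          rw [hicc, Finset.filter_insert, if_pos hcase]
        have hcard : (((Finset.Icc 1 (n + 1)).filter (fun j => sk j = s)).card : ℝ)
            = (((Finset.Icc 1 n).filter (fun j => sk j = s)).card : ℝ) + 1 := by
          rw [hfil, Finset.card_insert_of_notMem (fun h => hnotmem (Finset.mem_filter.1 h).1)]
          push_cast; ring
        rw [hcard, hvs, if_pos hcase.symm]
        have := ih hn s
        nlinarith [hα.2]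
      · have hfil : (Finset.Icc 1 (n + 1)).filter (fun j => sk j = s)
            = (Finset.Icc 1 n).filter (fun j => sk j = s) := by
          rw [hicc, Finset.filter_insert, if_neg hcase]
        rw [hfil, hvs, if_neg (fun h => hcase h.symm)]
        have := ih hn s
        have hpos : 0 ≤ (1 - α) * r n (sk (n + 1)) := by nlinarith
        linarith
  -- vhat K s ≤ ∑ ν s s' * c s'
  have hub : ∀ s, vhat K s ≤ ∑ s', ν s s' * c s' := by
    intro s
    have h1 := hinv K le_rfl s
    have h2 : 0 ≤ (1 - α) * ∑ s', B s s' * r K s' := by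
      apply mul_nonneg (le_of_lt hα1)
      apply Finset.sum_nonneg
      intro j _
      exact mul_nonneg (hBnonneg s j) (hrnn K le_rfl j)
    have h3 : (∑ s', ν s s' * c s') = (1 - α) * ∑ s', B s s' * c s' := by
      rw [Finset.mul_sum]
      apply Finset.sum_congr rfl
      intro j _
      rw [hν s j]
      ring
    rw [h3, ← h1]
    linarith
  have hεα : 0 < ε * (1 - α) := mul_pos hε hα1
  have hmain : ∀ s, (((Finset.Icc 1 K).filter (fun k => sk k = s)).card : ℝ)
      ≤ (∑ s', ν s s' * c s') / (ε * (1 - α)) := by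
    intro s
    rw [le_div_iff₀ hεα]
    exact le_trans (hlb K le_rfl s) (hub s)
  refine ⟨hmain, ?_⟩
  have hK : (K : ℝ) = ∑ s, (((Finset.Icc 1 K).filter (fun k => sk k = s)).card : ℝ) := by
    have := Finset.card_eq_sum_card_fiberwise
      (f := sk) (s := Finset.Icc 1 K) (t := Finset.univ) (fun x _ => Finset.mem_univ (sk x))
    rw [Nat.card_Icc] at this
    simp only [Nat.add_sub_cancel] at this
    exact_mod_cast this
  rw [hK, Finset.sum_div]
  exact Finset.sum_le_sum (fun s _ => hmain s)
end

section
/- Let S ≥ 1, let P be an S×S row-stochastic real matrix, α ∈ (0,1), ε > 0, and let c ∈ ℝ^S have nonnegative entries. Let K ∈ ℕ, s_1, …, s_K, (v̂_k)_{k=0}^K, (r_k)_{k=0}^K satisfy the push recursion: v̂_0 = 0, r_0 = c, and for each k ∈ {1,…,K}, v̂_k(s) = v̂_{k−1}(s) + (1−α) r_{k−1}(s_k) 1(s = s_k) and r_k(s) = r_{k−1}(s)·1(s ≠ s_k) + α P(s, s_k) r_{k−1}(s_k), with r_{k−1}(s_k) > ε for every k. Then for any function d : Fin S → ℝ with nonnegative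 values, Σ_{k=1}^K d(s_k) ≤ (1/(ε(1−α))) · Σ_s d(s) (ν_s · c), where ν_s = (1−α) e_s^T (I − αP)^{-1}. -/
section Aux
attribute [local instance] Matrix.linftyOpNormedRing Matrix.linftyOpNormedAlgebra
  Matrix.linftyOpNormedSpace

lemma neumann_facts (S : ℕ) (P : Matrix (Fin S) (Fin S) ℝ)
    (hPnonneg : ∀ i j, 0 ≤ P i j) (hProw : ∀ i, ∑ j, P i j = 1)
    (α : ℝ) (hα : α ∈ Set.Ioo (0 : ℝ) 1) :
    (∀ i j, 0 ≤ (1 - α • P)⁻¹ i j) ∧ (1 - α • P)⁻¹ * (1 - α • P) = 1 := by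
  obtain ⟨hα0, hα1⟩ := hα
  have hQnorm : ‖α • P‖ < 1 := by
    have hnn : ‖α • P‖₊ < 1 := by
      rw [Matrix.linfty_opNNNorm_def]
      refine Finset.sup_lt_iff (by norm_num) |>.mpr fun i _ => ?_
      rw [← NNReal.coe_lt_coe]
      push_cast
      have heq : ∀ j, ‖(α • P) i j‖ = α * P i j := fun j => by
        rw [Matrix.smul_apply, smul_eq_mul, Real.norm_eq_abs,
          abs_of_nonneg (mul_nonneg hα0.le (hPnonneg i j))]
      calc ∑ j, ‖(α • P) i j‖ = ∑ j, α * P i j := Finset.sum_congr rfl fun j _ => heq j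
        _ = α := by rw [← Finset.mul_sum, hProw, mul_one]
        _ < 1 := hα1
    calc ‖α • P‖ = ((‖α • P‖₊ : NNReal) : ℝ) := (coe_nnnorm _).symm
      _ < 1 := by exact_mod_cast hnn
  have hmul : (∑' n : ℕ, (α • P) ^ n) * (1 - α • P) = 1 := geom_series_mul_neg _ hQnorm
  have hinv : (1 - α • P)⁻¹ = ∑' n : ℕ, (α • P) ^ n :=
    Matrix.inv_eq_left_inv hmul
  constructor
  · intro i j
    rw [hinv]
    have hpow : ∀ n, ∀ a b, 0 ≤ ((α • P) ^ n) a b := by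
      intro n
      induction n with
      | zero => intro a b; rw [pow_zero]; by_cases h : a = b <;>
          simp [Matrix.one_apply, h]
      | succ n ih =>
        intro a b
        rw [pow_succ, Matrix.mul_apply]
        exact Finset.sum_nonneg fun x _ => mul_nonneg (ih a x)
          (mul_nonneg hα0.le (hPnonneg x b))
    have hHS : HasSum (fun n : ℕ => (α • P) ^ n) (∑' n : ℕ, (α • P) ^ n) :=
      (summable_geometric_of_norm_lt_one hQnorm).hasSum
    let E : Matrix (Fin S) (Fin S) ℝ →ₗ[ℝ] ℝ :=
      { toFun := fun A => A i j, map_add' := fun _ _ => rfl, map_smul' := fun _ _ => rfl }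
    have hEcont : Continuous E := E.continuous_of_finiteDimensional
    have hHS' : HasSum (fun n : ℕ => ((α • P) ^ n) i j) ((∑' n : ℕ, (α • P) ^ n) i j) :=
      (hHS.map E.toAddMonoidHom hEcont :)
    exact hasSum_le (fun n => hpow n i j) hasSum_zero hHS' |>.trans_eq rfl
  · rw [hinv]; exact hmul

end Aux

/-- Weighted push-count bound for the Backward-EPE recursion. Under
the push recursion with nonnegative cost `c` and `r_{k-1}(s_k) > ε` at every
iteration, for any nonnegative weights `d` we have
`Σ_{k=1}^K d(s_k) ≤ (1/(ε(1-α))) Σ_s d(s) (ν_s·c)`,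
where `ν_s = (1-α) e_s^T (I - αP)⁻¹`. -/
theorem backward_epe_weighted_push_count_bound
    (S : ℕ) (hS : 1 ≤ S) (P : Matrix (Fin S) (Fin S) ℝ)
    (hPnonneg : ∀ i j, 0 ≤ P i j) (hProw : ∀ i, ∑ j, P i j = 1)
    (α : ℝ) (hα : α ∈ Set.Ioo (0 : ℝ) 1) (ε : ℝ) (hε : 0 < ε)
    (c : Fin S → ℝ) (hc : ∀ s, 0 ≤ c s)
    (ν : Fin S → Fin S → ℝ)
    (hν : ∀ s s', ν s s' = (1 - α) * (1 - α • P)⁻¹ s s')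
    (K : ℕ) (sk : ℕ → Fin S) (vhat r : ℕ → Fin S → ℝ)
    (hv0 : ∀ s, vhat 0 s = 0) (hr0 : ∀ s, r 0 s = c s)
    (hvup : ∀ k ∈ Finset.Icc 1 K, ∀ s,
      vhat k s = vhat (k - 1) s
        + (1 - α) * r (k - 1) (sk k) * (if s = sk k then (1 : ℝ) else 0))
    (hrup : ∀ k ∈ Finset.Icc 1 K, ∀ s,
      r k s = r (k - 1) s * (if s ≠ sk k then (1 : ℝ) else 0)
        + α * P s (sk k) * r (k - 1) (sk k))
    (hbig : ∀ k ∈ Finset.Icc 1 K, r (k - 1) (sk k) > ε)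
    (d : Fin S → ℝ) (hd : ∀ s, 0 ≤ d s) :
    ∑ k ∈ Finset.Icc 1 K, d (sk k)
      ≤ (1 / (ε * (1 - α))) * ∑ s, d s * (∑ s', ν s s' * c s') := by
  obtain ⟨hα0, hα1⟩ := hα
  have h1α : (0 : ℝ) < 1 - α := by linarith
  obtain ⟨hBnn, hBmul⟩ := neumann_facts S P hPnonneg hProw α ⟨hα0, hα1⟩
  have hνnn : ∀ s s', 0 ≤ ν s s' := fun s s' => by
    rw [hν]; exact mul_nonneg h1α.le (hBnn s s')
  -- key matrix identity
  have hkey : ∀ s t : Fin S,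
      ν s t - α * ∑ s', ν s s' * P s' t = (1 - α) * (if s = t then 1 else 0) := by
    intro s t
    have h1 : ((1 - α • P)⁻¹ * (1 - α • P)) s t = (1 : Matrix (Fin S) (Fin S) ℝ) s t := by
      rw [hBmul]
    rw [Matrix.mul_apply, Matrix.one_apply] at h1
    have h2 : ∀ s', (1 - α • P)⁻¹ s s' * (1 - α • P) s' t
        = (1 - α • P)⁻¹ s s' * ((if s' = t then (1:ℝ) else 0) - α * P s' t) := by
      intro s'
      simp [Matrix.sub_apply, Matrix.smul_apply, Matrix.one_apply]
    rw [Finset.sum_congr rfl fun s' _ => h2 s'] at h1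
    have h3 : ∑ s', (1 - α • P)⁻¹ s s' * ((if s' = t then (1:ℝ) else 0) - α * P s' t)
        = (1 - α • P)⁻¹ s t - α * ∑ s', (1 - α • P)⁻¹ s s' * P s' t := by
      simp_rw [mul_sub, Finset.sum_sub_distrib, mul_ite, mul_one, mul_zero,
        Finset.sum_ite_eq' Finset.univ, Finset.mem_univ, if_true, Finset.mul_sum]
      congr 1
      exact Finset.sum_congr rfl fun s' _ => by ring
    rw [h3] at h1
    calc ν s t - α * ∑ s', ν s s' * P s' t
        = (1 - α) * ((1 - α • P)⁻¹ s t - α * ∑ s', (1 - α • P)⁻¹ s s' * P s' t) := by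
          simp_rw [hν]
          have hs : ∑ s', (1 - α) * (1 - α • P)⁻¹ s s' * P s' t
              = (1 - α) * ∑ s', (1 - α • P)⁻¹ s s' * P s' t := by
            rw [Finset.mul_sum]
            exact Finset.sum_congr rfl fun s' _ => by ring
          rw [hs]
          ring
      _ = (1 - α) * (if s = t then 1 else 0) := by rw [h1]
  -- nonnegativity of residuals
  have hrnn : ∀ k, k ≤ K → ∀ s, 0 ≤ r k s := by
    intro k
    induction k with
    | zero => intro _ s; rw [hr0]; exact hc s
    | succ k ih =>
      intro hk s
      have hk1 : k + 1 ∈ Finset.Icc 1 K := Finset.mem_Icc.mpr ⟨Nat.le_add_left 1 k, hk⟩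
      have := hrup (k + 1) hk1 s
      simp only [Nat.add_sub_cancel] at this
      rw [this]
      have ihk := ih (Nat.le_of_succ_le hk)
      refine add_nonneg (mul_nonneg (ihk s) ?_)
        (mul_nonneg (mul_nonneg hα0.le (hPnonneg s (sk (k + 1)))) (ihk (sk (k + 1))))
      by_cases h : s ≠ sk (k + 1) <;> simp [h]
  -- conservation invariant
  have hinv : ∀ k, k ≤ K → ∀ s,
      vhat k s + ∑ s', ν s s' * r k s' = ∑ s', ν s s' * c s' := by
    intro k
    induction k with
    | zero => intro _ s; simp [hv0, hr0]
    | succ k ih =>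
      intro hk s
      have hk1 : k + 1 ∈ Finset.Icc 1 K := Finset.mem_Icc.mpr ⟨Nat.le_add_left 1 k, hk⟩
      have ihk := ih (Nat.le_of_succ_le hk) s
      set t := sk (k + 1) with ht
      set R := r k t with hR
      have hv := hvup (k + 1) hk1 s
      simp only [Nat.add_sub_cancel, ← ht, ← hR] at hv
      have hr' : ∀ s', r (k + 1) s'
          = r k s' * (if s' ≠ t then (1:ℝ) else 0) + α * P s' t * R := by
        intro s'
        have := hrup (k + 1) hk1 s'
        simpa only [Nat.add_sub_cancel, ← ht, ← hR] using this
      have hsum : ∑ s', ν s s' * r (k + 1) s'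
          = (∑ s', ν s s' * r k s')
            - (ν s t - α * ∑ s', ν s s' * P s' t) * R := by
        have step : ∀ s', ν s s' * r (k + 1) s'
            = ν s s' * r k s' - (if s' = t then ν s s' * r k s' else 0)
              + α * (ν s s' * P s' t) * R := by
          intro s'
          rw [hr']
          by_cases h : s' = t <;> simp [h] <;> ring
        rw [Finset.sum_congr rfl fun s' _ => step s']
        rw [Finset.sum_add_distrib, Finset.sum_sub_distrib,
          Finset.sum_ite_eq' Finset.univ, if_pos (Finset.mem_univ t)]
        have : ∑ s', α * (ν s s' * P s' t) * R
            = (α * ∑ s', ν s s' * P s' t) * R := by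
          rw [Finset.mul_sum, Finset.sum_mul]
          all_goals exact Finset.sum_congr rfl fun s' _ => by ring
        rw [this]
        ring
      rw [hv, hsum, hkey s t]
      rw [← ihk]
      ring
  -- closed form for vhat
  have hvclosed : ∀ n, n ≤ K → ∀ s, vhat n s
      = ∑ k ∈ Finset.Icc 1 n, (1 - α) * r (k - 1) (sk k) * (if s = sk k then (1:ℝ) else 0) := by
    intro n
    induction n with
    | zero => intro _ s; simp [hv0]
    | succ n ih =>
      intro hn s
      have hn1 : n + 1 ∈ Finset.Icc 1 K := Finset.mem_Icc.mpr ⟨Nat.le_add_left 1 n, hn⟩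
      have hv := hvup (n + 1) hn1 s
      simp only [Nat.add_sub_cancel] at hv
      rw [hv, ih (Nat.le_of_succ_le hn) s,
        Finset.sum_Icc_succ_top (Nat.le_add_left 1 n)]
      norm_num
  -- lower bound
  have hpos : (0:ℝ) < ε * (1 - α) := mul_pos hε h1α
  have hlow : ε * (1 - α) * ∑ k ∈ Finset.Icc 1 K, d (sk k)
      ≤ ∑ s, d s * vhat K s := by
    have hswap : ∑ s, d s * vhat K s
        = ∑ k ∈ Finset.Icc 1 K, (1 - α) * r (k - 1) (sk k) * d (sk k) := by
      calc ∑ s, d s * vhat K s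
          = ∑ s, ∑ k ∈ Finset.Icc 1 K,
              d s * ((1 - α) * r (k - 1) (sk k) * (if s = sk k then (1:ℝ) else 0)) := by
            refine Finset.sum_congr rfl fun s _ => ?_
            rw [hvclosed K le_rfl s, Finset.mul_sum]
        _ = ∑ k ∈ Finset.Icc 1 K, ∑ s,
              d s * ((1 - α) * r (k - 1) (sk k) * (if s = sk k then (1:ℝ) else 0)) :=
            Finset.sum_comm
        _ = ∑ k ∈ Finset.Icc 1 K, (1 - α) * r (k - 1) (sk k) * d (sk k) := by
            refine Finset.sum_congr rfl fun k _ => ?_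
            rw [Finset.sum_congr rfl fun s _ =>
              show d s * ((1 - α) * r (k - 1) (sk k) * (if s = sk k then (1:ℝ) else 0))
                  = if s = sk k then (1 - α) * r (k - 1) (sk k) * d s else 0 by
                by_cases h : s = sk k <;> simp [h] <;> ring]
            rw [Finset.sum_ite_eq' Finset.univ, if_pos (Finset.mem_univ (sk k))]
    rw [hswap, Finset.mul_sum]
    refine Finset.sum_le_sum fun k hk => ?_
    have := hbig k hk
    have hd' := hd (sk k)
    have : ε * (1 - α) * d (sk k) ≤ (1 - α) * r (k - 1) (sk k) * d (sk k) := by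
      apply mul_le_mul_of_nonneg_right _ hd'
      nlinarith [hbig k hk]
    linarith
  -- upper bound: vhat K ≤ ν·c
  have hup : ∑ s, d s * vhat K s ≤ ∑ s, d s * (∑ s', ν s s' * c s') := by
    refine Finset.sum_le_sum fun s _ => mul_le_mul_of_nonneg_left ?_ (hd s)
    have := hinv K le_rfl s
    have hres : 0 ≤ ∑ s', ν s s' * r K s' :=
      Finset.sum_nonneg fun s' _ => mul_nonneg (hνnn s s') (hrnn K le_rfl s')
    linarith
  -- conclude
  have hfinal : ε * (1 - α) * ∑ k ∈ Finset.Icc 1 K, d (sk k)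
      ≤ ∑ s, d s * (∑ s', ν s s' * c s') := le_trans hlow hup
  rw [show (1 / (ε * (1 - α))) * (∑ s, d s * (∑ s', ν s s' * c s'))
      = (∑ s, d s * (∑ s', ν s s' * c s')) / (ε * (1 - α)) by ring]
  rw [le_div_iff₀ hpos]
  linarith [hfinal]
end

section
/- Let S ≥ 1, let Q and Q̄ be S×S row-stochastic real matrices, α ∈ (0,1), let c ∈ ℝ^S have nonnegative entries, and let v = (1−α)(I − αQ)^{-1} c and v̄ = (1−α)(I − αQ̄)^{-1} c. Then for every T ∈ ℕ with T ≥ 1: ‖v̄ − v‖_∞ ≤ (α/(1−α)) · max_{1 ≤ τ ≤ T} ‖(Q̄ − Q) Q^{τ−1} c‖_∞ + 2 ‖c‖_∞ α^T. -/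
/-!
Unrolling both Bellman equations `v = (1 - α) c + α Q v` for `T` steps, the first `T` terms
differ by `(1 - α) ∑_{t < T} αᵗ (Q̄ᵗ - Qᵗ) c`, while the two remainders are `α^T` times images of
`v`, `v̄` under stochastic matrices, hence each of sup norm at most `‖c‖`. Telescoping
`Q̄ᵗ⁺¹ c - Qᵗ⁺¹ c = Q̄ (Q̄ᵗ c - Qᵗ c) + (Q̄ - Q) Qᵗ c` with `‖Q̄ x‖ ≤ ‖x‖` bounds
`‖(Q̄ᵗ - Qᵗ) c‖` by `t` times the maximum in the statement, and `(1 - α) ∑ t αᵗ ≤ α / (1 - α)`.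
-/

open Matrix Finset

namespace Matrix

variable {n : Type*} [Fintype n] [DecidableEq n] {P Pbar : Matrix n n ℝ} {α : ℝ}

lemma norm_mulVec_le_of_mem_rowStochastic (hP : P ∈ rowStochastic ℝ n) (x : n → ℝ) :
    ‖P *ᵥ x‖ ≤ ‖x‖ := by
  refine (pi_norm_le_iff_of_nonneg (norm_nonneg x)).2 fun i => ?_
  calc ‖(P *ᵥ x) i‖ = |∑ j, P i j * x j| := rfl
    _ ≤ ∑ j, P i j * |x j| := by
        refine (abs_sum_le_sum_abs _ _).trans_eq (sum_congr rfl fun j _ => ?_)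
        rw [abs_mul, abs_of_nonneg (nonneg_of_mem_rowStochastic hP)]
    _ ≤ ∑ j, P i j * ‖x‖ :=
        sum_le_sum fun j _ => mul_le_mul_of_nonneg_left (norm_le_pi_norm x j)
          (nonneg_of_mem_rowStochastic hP)
    _ = ‖x‖ := by rw [← sum_mul, sum_row_of_mem_rowStochastic hP, one_mul]

lemma norm_pow_mulVec_le_of_mem_rowStochastic (hP : P ∈ rowStochastic ℝ n) (k : ℕ)
    (x : n → ℝ) : ‖P ^ k *ᵥ x‖ ≤ ‖x‖ :=
  norm_mulVec_le_of_mem_rowStochastic (pow_mem hP k) x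

lemma isUnit_one_sub_smul_of_mem_rowStochastic (hP : P ∈ rowStochastic ℝ n) (hα : |α| < 1) :
    IsUnit (1 - α • P) := by
  refine mulVec_injective_iff_isUnit.1 fun x y hxy => sub_eq_zero.1 ?_
  set z := x - y
  have hz : z = α • P *ᵥ z := by
    have : (1 - α • P) *ᵥ z = 0 := by rw [mulVec_sub, hxy, sub_self]
    rwa [sub_mulVec, one_mulVec, smul_mulVec, sub_eq_zero] at this
  have : ‖z‖ ≤ |α| * ‖z‖ := by
    calc ‖z‖ = |α| * ‖P *ᵥ z‖ := by rw [← Real.norm_eq_abs, ← norm_smul, ← hz]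
      _ ≤ |α| * ‖z‖ := by gcongr; exact norm_mulVec_le_of_mem_rowStochastic hP z
  exact norm_eq_zero.1 (by nlinarith [norm_nonneg z, abs_nonneg α])

noncomputable def discountedValue (α : ℝ) (P : Matrix n n ℝ) (c : n → ℝ) : n → ℝ :=
  (1 - α) • (1 - α • P)⁻¹ *ᵥ c

lemma discountedValue_eq_add_smul_mulVec (hP : P ∈ rowStochastic ℝ n) (hα : |α| < 1)
    (c : n → ℝ) :
    discountedValue α P c = (1 - α) • c + α • P *ᵥ discountedValue α P c := by
  have h : (1 - α • P) *ᵥ discountedValue α P c = (1 - α) • c := by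
    rw [discountedValue, mulVec_smul, mulVec_mulVec,
      mul_nonsing_inv _ ((isUnit_one_sub_smul_of_mem_rowStochastic hP hα).map detMonoidHom),
      one_mulVec]
  rwa [sub_mulVec, one_mulVec, smul_mulVec, sub_eq_iff_eq_add] at h

lemma norm_discountedValue_le (hP : P ∈ rowStochastic ℝ n) (hα₀ : 0 ≤ α) (hα₁ : α < 1)
    (c : n → ℝ) : ‖discountedValue α P c‖ ≤ ‖c‖ := by
  set v := discountedValue α P c
  have : ‖v‖ ≤ (1 - α) * ‖c‖ + α * ‖v‖ :=
    calc ‖v‖ = ‖(1 - α) • c + α • P *ᵥ v‖ := by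
          rw [← discountedValue_eq_add_smul_mulVec hP (abs_lt.2 ⟨by linarith, hα₁⟩)]
      _ ≤ (1 - α) * ‖c‖ + α * ‖P *ᵥ v‖ := by
          refine (norm_add_le _ _).trans_eq ?_
          rw [norm_smul, norm_smul, Real.norm_of_nonneg (by linarith), Real.norm_of_nonneg hα₀]
      _ ≤ (1 - α) * ‖c‖ + α * ‖v‖ := by
          gcongr; exact norm_mulVec_le_of_mem_rowStochastic hP v
  nlinarith

lemma discountedValue_eq_sum_add_pow (hP : P ∈ rowStochastic ℝ n) (hα : |α| < 1)
    (c : n → ℝ) (N : ℕ) :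
    discountedValue α P c = (1 - α) • ∑ t ∈ range N, α ^ t • P ^ t *ᵥ c
      + α ^ N • P ^ N *ᵥ discountedValue α P c := by
  induction N with
  | zero => simp
  | succ N ih =>
    conv_lhs => rw [ih, discountedValue_eq_add_smul_mulVec hP hα c]
    rw [mulVec_add, mulVec_smul, mulVec_smul, mulVec_mulVec, ← pow_succ, sum_range_succ]
    module

lemma norm_pow_mulVec_sub_pow_mulVec_le (hPbar : Pbar ∈ rowStochastic ℝ n) (P : Matrix n n ℝ)
    (c : n → ℝ) (t : ℕ) :
    ‖Pbar ^ t *ᵥ c - P ^ t *ᵥ c‖ ≤ ∑ τ ∈ range t, ‖((Pbar - P) * P ^ τ) *ᵥ c‖ := by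
  induction t with
  | zero => simp
  | succ t ih =>
    have h : Pbar ^ (t + 1) *ᵥ c - P ^ (t + 1) *ᵥ c
        = Pbar *ᵥ (Pbar ^ t *ᵥ c - P ^ t *ᵥ c) + ((Pbar - P) * P ^ t) *ᵥ c := by
      rw [pow_succ', pow_succ', ← mulVec_mulVec, ← mulVec_mulVec, ← mulVec_mulVec, mulVec_sub,
        sub_mulVec]
      abel
    rw [h, sum_range_succ]
    exact (norm_add_le _ _).trans
      (add_le_add_left ((norm_mulVec_le_of_mem_rowStochastic hPbar _).trans ih) _)

lemma norm_discountedValue_sub_le (hP : P ∈ rowStochastic ℝ n) (hPbar : Pbar ∈ rowStochastic ℝ n)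
    (hα₀ : 0 ≤ α) (hα₁ : α < 1) (c : n → ℝ) (T : ℕ) :
    ‖discountedValue α Pbar c - discountedValue α P c‖
      ≤ (1 - α) * ∑ t ∈ range T, α ^ t * ‖Pbar ^ t *ᵥ c - P ^ t *ᵥ c‖ + 2 * ‖c‖ * α ^ T := by
  have hα : |α| < 1 := abs_lt.2 ⟨by linarith, hα₁⟩
  have hv := discountedValue_eq_sum_add_pow hP hα c T
  have hvbar := discountedValue_eq_sum_add_pow hPbar hα c T
  set v := discountedValue α P c
  set vbar := discountedValue α Pbar c
  have hsplit : vbar - v = (1 - α) • ∑ t ∈ range T, α ^ t • (Pbar ^ t *ᵥ c - P ^ t *ᵥ c)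
      + α ^ T • (Pbar ^ T *ᵥ vbar - P ^ T *ᵥ v) := by
    conv_lhs => rw [hvbar, hv]
    simp only [smul_sub, sum_sub_distrib]
    abel
  have htail : ‖Pbar ^ T *ᵥ vbar - P ^ T *ᵥ v‖ ≤ 2 * ‖c‖ := by
    refine (norm_sub_le _ _).trans ?_
    linarith [(norm_pow_mulVec_le_of_mem_rowStochastic hPbar T vbar).trans
        (norm_discountedValue_le hPbar hα₀ hα₁ c),
      (norm_pow_mulVec_le_of_mem_rowStochastic hP T v).trans
        (norm_discountedValue_le hP hα₀ hα₁ c)]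
  rw [hsplit]
  refine (norm_add_le _ _).trans ?_
  rw [norm_smul, norm_smul, Real.norm_of_nonneg (by linarith), Real.norm_of_nonneg (by positivity),
    mul_comm (2 * ‖c‖)]
  gcongr
  refine (norm_sum_le _ _).trans_eq (sum_congr rfl fun t _ => ?_)
  rw [norm_smul, Real.norm_of_nonneg (by positivity)]

end Matrix

lemma sum_range_mul_geometric_le {α : ℝ} (hα₀ : 0 ≤ α) (hα₁ : α < 1) (T : ℕ) :
    ∑ t ∈ range T, (t : ℝ) * α ^ t ≤ α / (1 - α) ^ 2 := by
  have hs := hasSum_coe_mul_geometric_of_norm_lt_one (r := α)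
    (by rwa [Real.norm_of_nonneg hα₀])
  exact hs.tsum_eq ▸ hs.summable.sum_le_tsum _ fun t _ => by positivity

theorem backward_epe_value_perturbation_bound_general
    (S : ℕ) (Q Qbar : Matrix (Fin S) (Fin S) ℝ)
    (hQnonneg : ∀ i j, 0 ≤ Q i j) (hQrow : ∀ i, ∑ j, Q i j = 1)
    (hQbarnonneg : ∀ i j, 0 ≤ Qbar i j) (hQbarrow : ∀ i, ∑ j, Qbar i j = 1)
    (α : ℝ) (hα : α ∈ Set.Ioo (0 : ℝ) 1)
    (c : Fin S → ℝ)
    (v vbar : Fin S → ℝ)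
    (hv : v = (1 - α) • ((1 - α • Q)⁻¹).mulVec c)
    (hvbar : vbar = (1 - α) • ((1 - α • Qbar)⁻¹).mulVec c)
    (T : ℕ) (hT : 1 ≤ T) :
    ‖vbar - v‖
      ≤ (α / (1 - α)) *
          (Finset.Icc 1 T).sup' (Finset.nonempty_Icc.mpr hT)
            (fun τ => ‖((Qbar - Q) * Q ^ (τ - 1)).mulVec c‖)
        + 2 * ‖c‖ * α ^ T := by
  obtain ⟨hα₀, hα₁⟩ := hα
  have hQ : Q ∈ rowStochastic ℝ (Fin S) := mem_rowStochastic_iff_sum.2 ⟨hQnonneg, hQrow⟩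
  have hQbar : Qbar ∈ rowStochastic ℝ (Fin S) :=
    mem_rowStochastic_iff_sum.2 ⟨hQbarnonneg, hQbarrow⟩
  set M := (Icc 1 T).sup' (nonempty_Icc.mpr hT) fun τ => ‖((Qbar - Q) * Q ^ (τ - 1)) *ᵥ c‖
  have hstep : ∀ τ < T, ‖((Qbar - Q) * Q ^ τ) *ᵥ c‖ ≤ M := fun τ hτ =>
    le_sup'_of_le _ (mem_Icc.2 ⟨Nat.le_add_left 1 τ, hτ⟩) (by simp)
  have hdiff : ∀ t ∈ range T, α ^ t * ‖Qbar ^ t *ᵥ c - Q ^ t *ᵥ c‖ ≤ t * α ^ t * M := by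
    intro t ht
    have hd : ‖Qbar ^ t *ᵥ c - Q ^ t *ᵥ c‖ ≤ t * M := by
      simpa using (norm_pow_mulVec_sub_pow_mulVec_le hQbar Q c t).trans <|
        sum_le_card_nsmul _ _ M fun τ hτ => hstep τ ((mem_range.1 hτ).trans (mem_range.1 ht))
    rw [mul_comm (t : ℝ), mul_assoc]
    gcongr
  have hM : 0 ≤ M := (norm_nonneg _).trans (hstep 0 hT)
  subst hv hvbar
  calc _ ≤ (1 - α) * ∑ t ∈ range T, α ^ t * ‖Qbar ^ t *ᵥ c - Q ^ t *ᵥ c‖ + 2 * ‖c‖ * α ^ T :=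
        norm_discountedValue_sub_le hQ hQbar hα₀.le hα₁ c T
    _ ≤ (1 - α) * ((α / (1 - α) ^ 2) * M) + 2 * ‖c‖ * α ^ T := by
        gcongr
        refine (sum_le_sum hdiff).trans ?_
        rw [← sum_mul]
        exact mul_le_mul_of_nonneg_right (sum_range_mul_geometric_le hα₀.le hα₁ T) hM
    _ = α / (1 - α) * M + 2 * ‖c‖ * α ^ T := by
        field_simp [show 1 - α ≠ 0 by linarith]

/-- Deterministic pointwise accuracy bound (eq. (33) of the paper).
For row-stochastic `Q`, `Q̄`, `α ∈ (0,1)`, nonnegative cost `c`, value functions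
`v = (1-α)(I-αQ)⁻¹ c` and `v̄ = (1-α)(I-αQ̄)⁻¹ c`, and any `T ≥ 1`:
`‖v̄ - v‖_∞ ≤ (α/(1-α)) max_{1 ≤ τ ≤ T} ‖(Q̄ - Q) Q^{τ-1} c‖_∞ + 2‖c‖_∞ α^T`.
The norm on `Fin S → ℝ` is the sup norm. -/
theorem backward_epe_value_perturbation_bound
    (S : ℕ) (hS : 1 ≤ S) (Q Qbar : Matrix (Fin S) (Fin S) ℝ)
    (hQnonneg : ∀ i j, 0 ≤ Q i j) (hQrow : ∀ i, ∑ j, Q i j = 1)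
    (hQbarnonneg : ∀ i j, 0 ≤ Qbar i j) (hQbarrow : ∀ i, ∑ j, Qbar i j = 1)
    (α : ℝ) (hα : α ∈ Set.Ioo (0 : ℝ) 1)
    (c : Fin S → ℝ) (hc : ∀ s, 0 ≤ c s)
    (v vbar : Fin S → ℝ)
    (hv : v = (1 - α) • ((1 - α • Q)⁻¹).mulVec c)
    (hvbar : vbar = (1 - α) • ((1 - α • Qbar)⁻¹).mulVec c)
    (T : ℕ) (hT : 1 ≤ T) :
    ‖vbar - v‖
      ≤ (α / (1 - α)) *
          (Finset.Icc 1 T).sup' (Finset.nonempty_Icc.mpr hT)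
            (fun τ => ‖((Qbar - Q) * Q ^ (τ - 1)).mulVec c‖)
        + 2 * ‖c‖ * α ^ T :=
  backward_epe_value_perturbation_bound_general S Q Qbar hQnonneg hQrow hQbarnonneg hQbarrow α hα c
    v vbar hv hvbar T hT
end

section
/- Let S ≥ 1, let Q and Q̄ be S×S row-stochastic real matrices, let c ∈ ℝ^S have nonnegative entries, and let λ ∈ [0,1]. Suppose |Q̄(s,s') − Q(s,s')| ≤ λ Q(s,s') for all states s, s'. Then for every t ∈ ℕ and every state s: (1−λ)^t (Q^t c)(s) ≤ (Q̄^t c)(s) ≤ (1+λ)^t (Q^t c)(s). -/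
/-- Entrywise multiplicative error propagation for matrix powers
(from Lemma 4 of the paper). If `|Q̄(s,s') - Q(s,s')| ≤ λ Q(s,s')` entrywise with
`λ ∈ [0,1]` and `c ≥ 0`, then `(1-λ)^t (Q^t c)(s) ≤ (Q̄^t c)(s) ≤ (1+λ)^t (Q^t c)(s)`
for every `t` and every state `s`. -/
theorem backward_epe_relative_error_powers
    (S : ℕ) (hS : 1 ≤ S) (Q Qbar : Matrix (Fin S) (Fin S) ℝ)
    (hQnonneg : ∀ i j, 0 ≤ Q i j) (hQrow : ∀ i, ∑ j, Q i j = 1)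
    (hQbarnonneg : ∀ i j, 0 ≤ Qbar i j) (hQbarrow : ∀ i, ∑ j, Qbar i j = 1)
    (c : Fin S → ℝ) (hc : ∀ s, 0 ≤ c s)
    (lam : ℝ) (hlam : lam ∈ Set.Icc (0 : ℝ) 1)
    (hrel : ∀ s s', |Qbar s s' - Q s s'| ≤ lam * Q s s') :
    ∀ (t : ℕ) (s : Fin S),
      (1 - lam) ^ t * (Q ^ t).mulVec c s ≤ (Qbar ^ t).mulVec c s ∧
      (Qbar ^ t).mulVec c s ≤ (1 + lam) ^ t * (Q ^ t).mulVec c s := by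
  obtain ⟨hlam0, hlam1⟩ := hlam
  have hentry : ∀ s s', (1 - lam) * Q s s' ≤ Qbar s s' ∧ Qbar s s' ≤ (1 + lam) * Q s s' := by
    intro s s'
    have h := abs_le.mp (hrel s s')
    constructor <;> nlinarith [h.1, h.2]
  have hQt : ∀ (t : ℕ) (s : Fin S), 0 ≤ (Q ^ t).mulVec c s := by
    intro t
    induction t with
    | zero => intro s; simpa [Matrix.one_mulVec] using hc s
    | succ t ih =>
      intro s
      rw [pow_succ', ← Matrix.mulVec_mulVec]
      show 0 ≤ ∑ j, Q s j * (Q ^ t).mulVec c j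
      exact Finset.sum_nonneg fun j _ => mul_nonneg (hQnonneg s j) (ih j)
  intro t
  induction t with
  | zero => intro s; simp
  | succ t ih =>
    intro s
    have key : ((Qbar : Matrix (Fin S) (Fin S) ℝ) ^ (t+1)).mulVec c s
        = ∑ j, Qbar s j * (Qbar ^ t).mulVec c j := by
      rw [pow_succ', ← Matrix.mulVec_mulVec]; rfl
    have keyQ : ((Q : Matrix (Fin S) (Fin S) ℝ) ^ (t+1)).mulVec c s
        = ∑ j, Q s j * (Q ^ t).mulVec c j := by
      rw [pow_succ', ← Matrix.mulVec_mulVec]; rfl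
    constructor
    · rw [key, keyQ, Finset.mul_sum]
      apply Finset.sum_le_sum
      intro j _
      have h1 := (hentry s j).1
      have h2 := (ih j).1
      have h3 : 0 ≤ (1 - lam) ^ t * (Q ^ t).mulVec c j :=
        mul_nonneg (pow_nonneg (by linarith) t) (hQt t j)
      calc (1 - lam) ^ (t+1) * (Q s j * (Q ^ t).mulVec c j)
          = ((1 - lam) * Q s j) * ((1 - lam) ^ t * (Q ^ t).mulVec c j) := by ring
        _ ≤ Qbar s j * (Qbar ^ t).mulVec c j :=
          mul_le_mul h1 h2 h3 (hQbarnonneg s j)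
    · rw [key, keyQ, Finset.mul_sum]
      apply Finset.sum_le_sum
      intro j _
      have h1 := (hentry s j).2
      have h2 := (ih j).2
      have hQb : 0 ≤ (Qbar ^ t).mulVec c j := le_trans
        (mul_nonneg (pow_nonneg (by linarith) t) (hQt t j)) (ih j).1
      calc Qbar s j * (Qbar ^ t).mulVec c j
          ≤ ((1 + lam) * Q s j) * ((1 + lam) ^ t * (Q ^ t).mulVec c j) :=
            mul_le_mul h1 h2 hQb (mul_nonneg (by linarith) (hQnonneg s j))
        _ = (1 + lam) ^ (t+1) * (Q s j * (Q ^ t).mulVec c j) := by ring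
end

section
/- Let S ≥ 1, let Q and Q̄ be S×S row-stochastic real matrices, α ∈ (0,1), let c ∈ ℝ^S be nonnegative with ‖c‖_∞ > 0, and let v = (1−α)(I − αQ)^{-1} c and v̄ = (1−α)(I − αQ̄)^{-1} c. Fix ε_rel ∈ (0,1) and ε_abs ∈ (0, 2‖c‖_∞), let T̄ = ⌈log(2‖c‖_∞/ε_abs)/(1−α)⌉ and λ = log(1 + ε_rel/2)/T̄. If |Q̄(s,s') − Q(s,s')| ≤ λ Q(s,s') for all states s, s', then for every state s: |v̄(s) − v(s)| ≤ (ε_rel/2) v(s) + ε_abs/2. -/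
/-!
Both value functions are Neumann series, `v = (1 - α) ∑ₖ αᵏ Qᵏ c`, whose terms lie in `[0, ‖c‖]`.
An entrywise relative perturbation `|Q̄ - Q| ≤ λ Q` propagates to powers as
`|Q̄ᵏ - Qᵏ| ≤ ((1 + λ)ᵏ - 1) Qᵏ`, and `(1 + λ)ᵏ ≤ e^{λT̄} = 1 + ε_rel/2` for `k < T̄`, so the first
`T̄` terms contribute at most `(ε_rel/2) v`; the remaining terms contribute at most
`αᵀ̄ ‖c‖ ≤ e^{-(1-α)T̄} ‖c‖ ≤ ε_abs/2`.
-/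

open Matrix Finset

attribute [local instance] Matrix.linftyOpNormedRing Matrix.linftyOpNormedAlgebra

namespace Matrix

variable {n : Type*} [Fintype n] [DecidableEq n]

theorem linfty_opNorm_le_one_of_mem_rowStochastic {M : Matrix n n ℝ}
    (hM : M ∈ rowStochastic ℝ n) : ‖M‖ ≤ 1 := by
  rw [linfty_opNorm_def, ← NNReal.coe_one, NNReal.coe_le_coe]
  refine Finset.sup_le fun i _ => ?_
  rw [← NNReal.coe_le_coe]
  push_cast
  simp only [Real.norm_of_nonneg (nonneg_of_mem_rowStochastic hM),
    sum_row_of_mem_rowStochastic hM i, le_refl]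

theorem abs_mulVec_apply_sub_le_of_mem_rowStochastic {M N : Matrix n n ℝ}
    (hM : M ∈ rowStochastic ℝ n) (hN : N ∈ rowStochastic ℝ n) {c : n → ℝ}
    (hc : ∀ j, 0 ≤ c j) (i : n) : |(M *ᵥ c) i - (N *ᵥ c) i| ≤ ‖c‖ := by
  have bound {P : Matrix n n ℝ} (hP : P ∈ rowStochastic ℝ n) : (P *ᵥ c) i ≤ ‖c‖ :=
    calc (P *ᵥ c) i ≤ ‖P *ᵥ c‖ := (le_abs_self _).trans (norm_le_pi_norm (P *ᵥ c) i)
      _ ≤ ‖P‖ * ‖c‖ := linfty_opNorm_mulVec P c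
      _ ≤ ‖c‖ := mul_le_of_le_one_left (norm_nonneg c)
          (linfty_opNorm_le_one_of_mem_rowStochastic hP)
  exact abs_sub_le_of_nonneg_of_le (nonneg_mulVec_of_mem_rowStochastic hM hc i) (bound hM)
    (nonneg_mulVec_of_mem_rowStochastic hN hc i) (bound hN)

theorem hasSum_pow_mulVec_inv_one_sub_smul {M : Matrix n n ℝ} (hM : M ∈ rowStochastic ℝ n)
    {α : ℝ} (hα0 : 0 ≤ α) (hα1 : α < 1) (c : n → ℝ) :
    HasSum (fun k => α ^ k • (M ^ k *ᵥ c)) ((1 - α • M)⁻¹ *ᵥ c) := by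
  have hnorm : ‖α • M‖ < 1 := by
    rw [norm_smul, Real.norm_of_nonneg hα0]
    exact mul_lt_one_of_nonneg_of_lt_one_left hα0 hα1
      (linfty_opNorm_le_one_of_mem_rowStochastic hM)
  have hgeom := hasSum_geom_series_inverse (α • M) hnorm
  rw [← nonsing_inv_eq_ringInverse] at hgeom
  simpa only [Function.comp_def, mulVec.addMonoidHomLeft, AddMonoidHom.coe_mk, ZeroHom.coe_mk,
    smul_pow, smul_mulVec] using
    hgeom.map (mulVec.addMonoidHomLeft c) (continuous_id.matrix_mulVec continuous_const)

theorem hasSum_discounted_mulVec_apply {M : Matrix n n ℝ} (hM : M ∈ rowStochastic ℝ n)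
    {α : ℝ} (hα0 : 0 ≤ α) (hα1 : α < 1) (c : n → ℝ) (i : n) :
    HasSum (fun k => (1 - α) * α ^ k * (M ^ k *ᵥ c) i) (((1 - α) • (1 - α • M)⁻¹ *ᵥ c) i) := by
  simpa only [Pi.smul_apply, smul_eq_mul, mul_assoc] using
    (Pi.hasSum.1 (hasSum_pow_mulVec_inv_one_sub_smul hM hα0 hα1 c) i).mul_left (1 - α)

theorem abs_pow_apply_sub_le {A B : Matrix n n ℝ} {r : ℝ} (hA : ∀ i j, 0 ≤ A i j) (hr : 0 ≤ r)
    (hBA : ∀ i j, |B i j - A i j| ≤ r * A i j) (k : ℕ) (i j : n) :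
    |(B ^ k) i j - (A ^ k) i j| ≤ ((1 + r) ^ k - 1) * (A ^ k) i j := by
  induction k generalizing j with
  | zero => simp
  | succ k ih =>
    have hB : ∀ i j, |B i j| ≤ (1 + r) * A i j := fun i j => by
      have := abs_sub_abs_le_abs_sub (B i j) (A i j)
      rw [abs_of_nonneg (hA i j)] at this
      linarith [hBA i j]
    have hr' : 0 ≤ (1 + r) ^ k - 1 := sub_nonneg.2 (one_le_pow₀ (by linarith))
    calc |(B ^ (k + 1)) i j - (A ^ (k + 1)) i j|
        = |∑ l, (((B ^ k) i l - (A ^ k) i l) * B l j + (A ^ k) i l * (B l j - A l j))| := by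
          simp only [pow_succ, mul_apply, ← sum_sub_distrib]
          congr 1; refine sum_congr rfl fun l _ => by ring
      _ ≤ ∑ l, (((1 + r) ^ k - 1) * (A ^ k) i l * ((1 + r) * A l j)
            + (A ^ k) i l * (r * A l j)) := by
          refine (abs_sum_le_sum_abs _ _).trans (sum_le_sum fun l _ => ?_)
          refine (abs_add_le _ _).trans (add_le_add ?_ ?_) <;> rw [abs_mul]
          · exact mul_le_mul (ih l) (hB l j) (abs_nonneg _)
              (mul_nonneg hr' (pow_apply_nonneg hA k i l))
          · rw [abs_of_nonneg (pow_apply_nonneg hA k i l)]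
            exact mul_le_mul_of_nonneg_left (hBA l j) (pow_apply_nonneg hA k i l)
      _ = ((1 + r) ^ (k + 1) - 1) * (A ^ (k + 1)) i j := by
          simp only [pow_succ, mul_apply, mul_sum]
          refine sum_congr rfl fun l _ => by ring

theorem abs_pow_mulVec_apply_sub_le {A B : Matrix n n ℝ} {r : ℝ} (hA : ∀ i j, 0 ≤ A i j)
    (hr : 0 ≤ r) (hBA : ∀ i j, |B i j - A i j| ≤ r * A i j) {c : n → ℝ} (hc : ∀ j, 0 ≤ c j)
    (k : ℕ) (i : n) :
    |(B ^ k *ᵥ c) i - (A ^ k *ᵥ c) i| ≤ ((1 + r) ^ k - 1) * (A ^ k *ᵥ c) i := by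
  simp only [mulVec, dotProduct, ← sum_sub_distrib, ← sub_mul, mul_sum]
  refine (abs_sum_le_sum_abs _ _).trans (sum_le_sum fun j _ => ?_)
  rw [abs_mul, abs_of_nonneg (hc j), ← mul_assoc]
  exact mul_le_mul_of_nonneg_right (abs_pow_apply_sub_le hA hr hBA k i j) (hc j)

end Matrix

theorem Real.one_add_log_div_pow_le {x : ℝ} (hx : 1 ≤ x) {T : ℕ} (hT : T ≠ 0) :
    (1 + Real.log x / T) ^ T ≤ x := by
  have hlog : 0 ≤ Real.log x / T := div_nonneg (Real.log_nonneg hx) T.cast_nonneg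
  calc (1 + Real.log x / T) ^ T ≤ Real.exp (Real.log x / T) ^ T :=
        pow_le_pow_left₀ (by linarith) (by linarith [Real.add_one_le_exp (Real.log x / T)]) T
    _ = x := by
        rw [← Real.exp_nat_mul, mul_div_cancel₀ _ (Nat.cast_ne_zero.2 hT),
          Real.exp_log (by linarith)]

theorem Real.mul_pow_le_of_log_div_le {α M η : ℝ} {T : ℕ} (hα0 : 0 ≤ α) (hα1 : α < 1)
    (hM : 0 ≤ M) (hη : 0 < η) (hT : Real.log (M / η) / (1 - α) ≤ T) : M * α ^ T ≤ η := by
  rcases hM.eq_or_lt with rfl | hM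
  · simpa using hη.le
  have hT' : Real.log (M / η) ≤ (1 - α) * T := by
    rwa [div_le_iff₀ (by linarith), mul_comm] at hT
  have hpow : α ^ T ≤ η / M :=
    calc α ^ T ≤ Real.exp (α - 1) ^ T :=
          pow_le_pow_left₀ hα0 (by linarith [Real.add_one_le_exp (α - 1)]) T
      _ = Real.exp (-((1 - α) * T)) := by rw [← Real.exp_nat_mul]; ring_nf
      _ ≤ Real.exp (-Real.log (M / η)) := Real.exp_le_exp.2 (by linarith)
      _ = η / M := by rw [Real.exp_neg, Real.exp_log (by positivity), inv_div]
  calc M * α ^ T ≤ M * (η / M) := mul_le_mul_of_nonneg_left hpow hM.le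
    _ = η := mul_div_cancel₀ η hM.ne'

theorem abs_sub_le_of_hasSum_discounted {α δ M v w : ℝ} {p q : ℕ → ℝ} (T : ℕ)
    (hα0 : 0 ≤ α) (hα1 : α < 1) (hδ : 0 ≤ δ) (hp : ∀ k, 0 ≤ p k)
    (hhead : ∀ k < T, |q k - p k| ≤ δ * p k) (htail : ∀ k, T ≤ k → |q k - p k| ≤ M)
    (hv : HasSum (fun k => (1 - α) * α ^ k * p k) v)
    (hw : HasSum (fun k => (1 - α) * α ^ k * q k) w) :
    |w - v| ≤ δ * v + α ^ T * M := by
  set g : ℕ → ℝ := fun k => (1 - α) * α ^ k * (q k - p k)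
  have hg : HasSum g (w - v) := by simpa only [g, mul_sub] using hw.sub hv
  have habs_g k : |g k| = (1 - α) * α ^ k * |q k - p k| := by
    rw [abs_mul, abs_of_nonneg (mul_nonneg (by linarith) (pow_nonneg hα0 k))]
  have head : |∑ k ∈ range T, g k| ≤ δ * v :=
    calc |∑ k ∈ range T, g k| ≤ ∑ k ∈ range T, |g k| := abs_sum_le_sum_abs _ _
      _ ≤ ∑ k ∈ range T, δ * ((1 - α) * α ^ k * p k) := sum_le_sum fun k hk => by
          rw [habs_g, mul_left_comm]
          exact mul_le_mul_of_nonneg_left (hhead k (mem_range.1 hk))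
            (mul_nonneg (by linarith) (pow_nonneg hα0 k))
      _ ≤ δ * v := by
          rw [← mul_sum]
          exact mul_le_mul_of_nonneg_left (sum_le_hasSum _ (fun k _ =>
            mul_nonneg (mul_nonneg (by linarith) (pow_nonneg hα0 k)) (hp k)) hv) hδ
  have hgeom : HasSum (fun k => (1 - α) * α ^ (k + T) * M) (α ^ T * M) := by
    have h := (hasSum_geometric_of_lt_one hα0 hα1).mul_left ((1 - α) * α ^ T * M)
    have hsum : (1 - α) * α ^ T * M * (1 - α)⁻¹ = α ^ T * M := by
      field_simp [(by linarith : (1 - α) ≠ 0)]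
    have hterm : (fun k => (1 - α) * α ^ (k + T) * M) =
        fun k => (1 - α) * α ^ T * M * α ^ k := by
      funext k; ring
    rwa [hterm, ← hsum]
  have tail : |∑' k, g (k + T)| ≤ α ^ T * M := by
    refine tsum_of_norm_bounded (f := fun k => g (k + T)) hgeom fun k => ?_
    rw [Real.norm_eq_abs, habs_g]
    exact mul_le_mul_of_nonneg_left (htail _ (by omega))
      (mul_nonneg (by linarith) (pow_nonneg hα0 _))
  rw [← hg.tsum_eq, ← hg.summable.sum_add_tsum_nat_add T]
  exact (abs_add_le _ _).trans (add_le_add head tail)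

theorem backward_epe_relative_error_value_general
    (S : ℕ) (Q Qbar : Matrix (Fin S) (Fin S) ℝ)
    (hQnonneg : ∀ i j, 0 ≤ Q i j) (hQrow : ∀ i, ∑ j, Q i j = 1)
    (hQbarnonneg : ∀ i j, 0 ≤ Qbar i j) (hQbarrow : ∀ i, ∑ j, Qbar i j = 1)
    (α : ℝ) (hα : α ∈ Set.Ioo (0 : ℝ) 1)
    (c : Fin S → ℝ) (hc : ∀ s, 0 ≤ c s)
    (v vbar : Fin S → ℝ)
    (hv : v = (1 - α) • ((1 - α • Q)⁻¹).mulVec c)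
    (hvbar : vbar = (1 - α) • ((1 - α • Qbar)⁻¹).mulVec c)
    (εrel εabs : ℝ) (hεrel : εrel ∈ Set.Ioo (0 : ℝ) 1)
    (hεabs : εabs ∈ Set.Ioo 0 (2 * ‖c‖))
    (Tbar : ℕ) (hTbar : Tbar = ⌈Real.log (2 * ‖c‖ / εabs) / (1 - α)⌉₊)
    (lam : ℝ) (hlam : lam = Real.log (1 + εrel / 2) / Tbar)
    (hrel : ∀ s s', |Qbar s s' - Q s s'| ≤ lam * Q s s') :
    ∀ s, |vbar s - v s| ≤ (εrel / 2) * v s + εabs / 2 := by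
  obtain ⟨hα0, hα1⟩ := hα
  have hQ := mem_rowStochastic_iff_sum.2 ⟨hQnonneg, hQrow⟩
  have hQbar := mem_rowStochastic_iff_sum.2 ⟨hQbarnonneg, hQbarrow⟩
  obtain ⟨hεrel0, -⟩ := hεrel
  have hεrel_one : 1 ≤ 1 + εrel / 2 := by linarith
  have hlam0 : 0 ≤ lam := hlam ▸ div_nonneg (Real.log_nonneg hεrel_one) Tbar.cast_nonneg
  have hhead : ∀ k < Tbar, (1 + lam) ^ k - 1 ≤ εrel / 2 := fun k hk => by
    have hpow := pow_le_pow_right₀ (le_add_of_nonneg_right hlam0) hk.le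
    have hbound := Real.one_add_log_div_pow_le hεrel_one (Nat.ne_zero_of_lt hk)
    rw [← hlam] at hbound
    linarith
  have htail : ‖c‖ * α ^ Tbar ≤ εabs / 2 :=
    Real.mul_pow_le_of_log_div_le hα0.le hα1 (norm_nonneg c) (half_pos hεabs.1)
      (by rw [div_div_eq_mul_div, mul_comm, hTbar]; exact Nat.le_ceil _)
  intro s
  have hterm_nonneg k := nonneg_mulVec_of_mem_rowStochastic (pow_mem hQ k) hc s
  have key := abs_sub_le_of_hasSum_discounted Tbar hα0.le hα1 (half_pos hεrel0).le hterm_nonneg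
    (fun k hk => (abs_pow_mulVec_apply_sub_le hQnonneg hlam0 hrel hc k s).trans
      (mul_le_mul_of_nonneg_right (hhead k hk) (hterm_nonneg k)))
    (fun k _ =>
      abs_mulVec_apply_sub_le_of_mem_rowStochastic (pow_mem hQbar k) (pow_mem hQ k) hc s)
    (hasSum_discounted_mulVec_apply hQ hα0.le hα1 c s)
    (hasSum_discounted_mulVec_apply hQbar hα0.le hα1 c s)
  rw [hv, hvbar]
  linarith

/-- Deterministic relative-plus-absolute error implication
(eq. (61) of the paper, used in Lemma 4 of Theorem 3). With
`T̄ = ⌈log(2‖c‖_∞/ε_abs)/(1-α)⌉` and `λ = log(1 + ε_rel/2)/T̄`, if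
`|Q̄(s,s') - Q(s,s')| ≤ λ Q(s,s')` entrywise, then
`|v̄(s) - v(s)| ≤ (ε_rel/2) v(s) + ε_abs/2` for every state `s`, where
`v`, `v̄` are the value functions of `Q`, `Q̄` with nonnegative cost `c`. -/
theorem backward_epe_relative_error_value
    (S : ℕ) (hS : 1 ≤ S) (Q Qbar : Matrix (Fin S) (Fin S) ℝ)
    (hQnonneg : ∀ i j, 0 ≤ Q i j) (hQrow : ∀ i, ∑ j, Q i j = 1)
    (hQbarnonneg : ∀ i j, 0 ≤ Qbar i j) (hQbarrow : ∀ i, ∑ j, Qbar i j = 1)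
    (α : ℝ) (hα : α ∈ Set.Ioo (0 : ℝ) 1)
    (c : Fin S → ℝ) (hc : ∀ s, 0 ≤ c s) (hcpos : 0 < ‖c‖)
    (v vbar : Fin S → ℝ)
    (hv : v = (1 - α) • ((1 - α • Q)⁻¹).mulVec c)
    (hvbar : vbar = (1 - α) • ((1 - α • Qbar)⁻¹).mulVec c)
    (εrel εabs : ℝ) (hεrel : εrel ∈ Set.Ioo (0 : ℝ) 1)
    (hεabs : εabs ∈ Set.Ioo 0 (2 * ‖c‖))
    (Tbar : ℕ) (hTbar : Tbar = ⌈Real.log (2 * ‖c‖ / εabs) / (1 - α)⌉₊)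
    (lam : ℝ) (hlam : lam = Real.log (1 + εrel / 2) / Tbar)
    (hrel : ∀ s s', |Qbar s s' - Q s s'| ≤ lam * Q s s') :
    ∀ s, |vbar s - v s| ≤ (εrel / 2) * v s + εabs / 2 :=
  backward_epe_relative_error_value_general S Q Qbar hQnonneg hQrow hQbarnonneg hQbarrow α hα c hc v
    vbar hv hvbar εrel εabs hεrel hεabs Tbar hTbar lam hlam hrel
end
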